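/- Let x, y, z, t be four distinct variables. (i) If the word x y t y x is an isoterm for a monoid S and S satisfies an identity x y z t x z y ≈ u with u ≠ x y z t x z y, then u = y z x t z y x; likewise, if S satisfies y z x t z y x ≈ u with u ≠ y z x t z y x, then u = x y z t x z y. (ii) The word x y z t x z y is an isoterm for a monoid S if and only if the word y z x t z y x is an isoterm for S. -/

import Mathlib

/-- Words over a countably infinite alphabet of variables (identified with ℕ). -/
abbrev Wd := List ℕ

/-- Evaluation of a word in a monoid under an assignment of the variables. -/
def evalWord {M : Type*} [Monoid M] (φ : ℕ → M) (u : Wd) : M := (u.map φ).prod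

/-- A monoid `M` satisfies the identity `e = (u, v)`. -/
def Sat (M : Type*) [Monoid M] (e : Wd × Wd) : Prop :=
  ∀ φ : ℕ → M, evalWord φ e.1 = evalWord φ e.2

/-- The identity `e` is a consequence of the set of identities `Γ`:
every monoid satisfying all identities of `Γ` satisfies `e`. -/
def Consequence (Γ : Set (Wd × Wd)) (e : Wd × Wd) : Prop :=
  ∀ (M : Type) [Monoid M], (∀ f ∈ Γ, Sat M f) → Sat M e

/-- The content of a word: the set of variables occurring in it. -/
def conW (u : Wd) : Set ℕ := {x | x ∈ u}

/-- The set of linear (exactly once occurring) variables of a word. -/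
def linW (u : Wd) : Set ℕ := {x | u.count x = 1}

/-- The set of non-linear (more than once occurring) variables of a word. -/
def nonW (u : Wd) : Set ℕ := {x | 2 ≤ u.count x}

/-- `restrict u X` is the word obtained from `u` by deleting all occurrences of
all variables not in `X`. -/
noncomputable def restrict (u : Wd) (X : Set ℕ) : Wd :=
  u.filter (fun a => @decide (a ∈ X) (Classical.propDecidable _))

/-- The closure of a set of identities under deleting variables. -/
def delta (Γ : Set (Wd × Wd)) : Set (Wd × Wd) :=
  {e | ∃ f ∈ Γ, ∃ X : Set ℕ, e = (restrict f.1 X, restrict f.2 X)}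

/-- A word is almost-linear if it has at most one non-linear variable. -/
def AlmostLinearW (u : Wd) : Prop := ∀ x y, 2 ≤ u.count x → 2 ≤ u.count y → x = y

/-- An identity is almost-linear if both of its sides are almost-linear words. -/
def AlmostLinearId (e : Wd × Wd) : Prop := AlmostLinearW e.1 ∧ AlmostLinearW e.2

/-- An identity is regular if both sides have the same content. -/
def RegularId (e : Wd × Wd) : Prop := conW e.1 = conW e.2

/-- A word `u` is an isoterm for a monoid `M` if the only word `v` with
`M ⊨ u ≈ v` is `u` itself. -/
def Isoterm (M : Type*) [Monoid M] (u : Wd) : Prop := ∀ v : Wd, Sat M (u, v) → v = u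

/-- An identity `u ≈ v` is block-balanced if `u(x, lin u) = v(x, lin u)`
for every variable `x`. -/
def BlockBalanced (e : Wd × Wd) : Prop :=
  ∀ x : ℕ, restrict e.1 ({x} ∪ linW e.1) = restrict e.2 ({x} ∪ linW e.1)

/-- A monoid is finitely based: some finite set of its identities implies all of them. -/
def FinitelyBased (S : Type*) [Monoid S] : Prop :=
  ∃ Γ : Set (Wd × Wd), Γ.Finite ∧ (∀ e ∈ Γ, Sat S e) ∧
    ∀ e : Wd × Wd, Sat S e → Consequence Γ e

/-- Index of the first occurrence of a variable in a word. -/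
def firstIdx (u : Wd) (x : ℕ) : ℕ := u.idxOf x

/-- Index of the last occurrence of a variable in a word. -/
def lastIdx (u : Wd) (x : ℕ) : ℕ := u.length - 1 - u.reverse.idxOf x

/-- σ1 : x y t1 x t2 y ≈ y x t1 x t2 y, with x=0, y=1, t1=2, t2=3. -/
def sigma1 : Wd × Wd := ([0,1,2,0,3,1], [1,0,2,0,3,1])

/-- σμ : x t1 x y t2 y ≈ x t1 y x t2 y, with x=0, y=1, t1=2, t2=3. -/
def sigmaMu : Wd × Wd := ([0,2,0,1,3,1], [0,2,1,0,3,1])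

/-- σ2 : x t1 y t2 x y ≈ x t1 y t2 y x, with x=0, y=1, t1=2, t2=3. -/
def sigma2 : Wd × Wd := ([0,2,1,3,0,1], [0,2,1,3,1,0])

/-!
Variables `x, y, z, t` are encoded as `0, 1, 2, 3`.

If `x y t y x` is an isoterm, so are all its factors and their renamings, in particular the
"centred palindromes" `t`, `x t x`, `x y t y x` on the letters `0, 1, 2` around `t`. Deleting
variables preserves identities, so if `S ⊨ w ≈ u` then `u` restricted to any set of letters is
a centred palindrome exactly when `w` restricted to it is the same one. For `w = x y z t x z y`
this makes `u` a rearrangement of `w` with restrictions `y z t z y` and `x t x`, in which the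
restrictions to `{x, y, t}` and `{x, z, t}` are not mirror-shaped; only `w` and `y z x t z y x`
remain. For (ii), each of the two words has a factor `y z (t x) z y`, resp. `y z (x t) z y`,
that is an injective substitution instance of `x y t y x`, so either one being an isoterm makes
`x y t y x` an isoterm and (i) applies.
-/

section
variable {S : Type*} [Monoid S]

lemma evalWord_append (φ : ℕ → S) (u v : Wd) :
    evalWord φ (u ++ v) = evalWord φ u * evalWord φ v := by
  simp [evalWord]

lemma evalWord_flatMap (φ : ℕ → S) (ρ : ℕ → Wd) (u : Wd) :
    evalWord φ (u.flatMap ρ) = evalWord (fun c => evalWord φ (ρ c)) u := by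
  induction u with
  | nil => rfl
  | cons c u ih => rw [List.flatMap_cons, evalWord_append, ih]; simp [evalWord]

variable {u v : Wd}

namespace Sat

lemma symm (h : Sat S (u, v)) : Sat S (v, u) := fun φ => (h φ).symm

lemma flatMap (h : Sat S (u, v)) (ρ : ℕ → Wd) : Sat S (u.flatMap ρ, v.flatMap ρ) :=
  fun φ => by simp only [evalWord_flatMap]; exact h _

lemma map (h : Sat S (u, v)) (f : ℕ → ℕ) : Sat S (u.map f, v.map f) := by
  simpa only [List.map_eq_flatMap] using h.flatMap (fun c => [f c])

lemma filter (h : Sat S (u, v)) (p : ℕ → Bool) : Sat S (u.filter p, v.filter p) := by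
  have hfilter : ∀ x : Wd, x.filter p = x.flatMap (fun c => if p c then [c] else []) := by
    intro x; induction x with
    | nil => rfl
    | cons c x ih => by_cases hc : p c <;> simp [hc, ih]
  simpa only [hfilter] using h.flatMap _

lemma append_append (h : Sat S (u, v)) (l r : Wd) : Sat S (l ++ u ++ r, l ++ v ++ r) :=
  fun φ => by simp only [evalWord_append, show evalWord φ u = evalWord φ v from h φ]

end Sat

namespace Isoterm

lemma eq_iff {I : Wd} (hI : Isoterm S I) (h : Sat S (u, v)) : u = I ↔ v = I := by
  constructor
  · rintro rfl; exact hI v h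
  · rintro rfl; exact hI u h.symm

lemma of_append_append {l r : Wd} (h : Isoterm S (l ++ u ++ r)) : Isoterm S u := fun v hv => by
  simpa using h _ (hv.append_append l r)

lemma map_perm (h : Isoterm S u) (π : Equiv.Perm ℕ) : Isoterm S (u.map π) := fun v hv => by
  have hu : v.map π.symm = u := h _ (by simpa [List.map_map] using hv.map π.symm)
  simp [← hu, List.map_map]

lemma of_flatMap {ρ τ : ℕ → Wd} (h : Isoterm S (u.flatMap ρ)) (hτ : ∀ c, (ρ c).flatMap τ = [c]) :
    Isoterm S u := fun v hv => by
  have hinv : ∀ x : Wd, (x.flatMap ρ).flatMap τ = x := by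
    intro x; simp [List.flatMap_assoc, hτ]
  rw [← hinv v, h _ (hv.flatMap ρ), hinv]

end Isoterm
end

def centredPalindromes : List Wd :=
  [[], [3], [0,3,0], [1,3,1], [2,3,2], [1,2,3,2,1], [0,1,3,1,0], [1,0,3,0,1], [0,2,3,2,0], [2,0,3,0,2]]

lemma isoterm_of_mem_centredPalindromes {S : Type*} [Monoid S] (hiso : Isoterm S [0,1,3,1,0]) :
    ∀ I ∈ centredPalindromes, Isoterm S I := by
  have h131 : Isoterm S [1,3,1] := hiso.of_append_append (l := [0]) (r := [0])
  have h3 : Isoterm S [3] := h131.of_append_append (l := [1]) (r := [1])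
  have h020 := hiso.map_perm (Equiv.swap 1 2)
  have h101 := hiso.map_perm (Equiv.swap 0 1)
  simp only [centredPalindromes, List.forall_mem_cons, List.not_mem_nil, IsEmpty.forall_iff,
    implies_true, and_true]
  refine ⟨h3.of_append_append (l := [3]) (r := []), h3, h131.map_perm (Equiv.swap 0 1), h131,
    h131.map_perm (Equiv.swap 1 2), h101.map_perm (Equiv.swap 0 2), hiso,
    h101, h020, h020.map_perm (Equiv.swap 0 2)⟩

lemma filter_eq_iff_of_sat {S : Type*} [Monoid S] {u v : Wd} (hiso : Isoterm S [0,1,3,1,0])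
    (h : Sat S (v, u)) (p : ℕ → Bool) :
    ∀ I ∈ centredPalindromes, (v.filter p = I ↔ u.filter p = I) := fun I hI =>
  (isoterm_of_mem_centredPalindromes hiso I hI).eq_iff (h.filter p)

lemma filter_mem_centredPalindromes {v : Wd} (hv : v = [0,1,2,3,0,2,1] ∨ v = [1,2,0,3,2,1,0])
    (c : ℕ) : v.filter (· ∈ [c, 3]) ∈ centredPalindromes := by
  rcases hv with rfl | rfl <;>
  · by_cases hc : c ≤ 3
    · interval_cases c <;> decide
    · obtain ⟨h0, h1, h2⟩ : 0 ≠ c ∧ 1 ≠ c ∧ 2 ≠ c := by omega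
      simp [h0, h1, h2, centredPalindromes]

-- The kernel check runs through the `7! = 5040` entries of `v.permutations'`.
set_option maxRecDepth 100000 in
lemma eq_or_eq_of_filter_iff {u v : Wd} (hv : v = [0,1,2,3,0,2,1] ∨ v = [1,2,0,3,2,1,0])
    (h : ∀ p : ℕ → Bool, ∀ I ∈ centredPalindromes, (v.filter p = I ↔ u.filter p = I)) :
    u = [0,1,2,3,0,2,1] ∨ u = [1,2,0,3,2,1,0] := by
  have hperm : u ∈ v.permutations' := by
    rw [List.mem_permutations', List.perm_iff_count]
    intro c
    have hc := (h (· ∈ [c, 3]) _ (filter_mem_centredPalindromes hv c)).1 rfl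
    rw [← List.count_filter (p := (· ∈ [c, 3])) (by simp), hc, List.count_filter (by simp)]
  have hcheck : ∀ v ∈ [[0,1,2,3,0,2,1], [1,2,0,3,2,1,0]], ∀ u ∈ v.permutations',
      (∀ p ∈ ([(· ∈ [0,3]), (· ∈ [1,2,3]), (· ∈ [0,1,3]), (· ∈ [0,2,3])] : List (ℕ → Bool)),
        ∀ I ∈ centredPalindromes, (v.filter p = I ↔ u.filter p = I)) →
      u = [0,1,2,3,0,2,1] ∨ u = [1,2,0,3,2,1,0] := by
    decide +kernel
  exact hcheck v (by simpa using hv) u hperm (fun p _ => h p)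

lemma eq_or_eq_of_sat {S : Type*} [Monoid S] {u v : Wd} (hiso : Isoterm S [0,1,3,1,0])
    (hv : v = [0,1,2,3,0,2,1] ∨ v = [1,2,0,3,2,1,0]) (h : Sat S (v, u)) :
    u = [0,1,2,3,0,2,1] ∨ u = [1,2,0,3,2,1,0] :=
  eq_or_eq_of_filter_iff hv (filter_eq_iff_of_sat hiso h)

def relabel (tImage : Wd) (c : ℕ) : Wd :=
  if c = 0 then [1] else if c = 1 then [2] else if c = 3 then tImage else [c + 4]

def unrelabel (c : ℕ) : Wd :=
  if c = 0 then [] else if c = 1 then [0] else if c = 2 then [1] else if c = 3 then [3] else [c - 4]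

lemma isoterm_of_isoterm_relabel {S : Type*} [Monoid S] {tImage : Wd}
    (ht : tImage.flatMap unrelabel = [3])
    (h : Isoterm S (([0,1,3,1,0] : Wd).flatMap (relabel tImage))) : Isoterm S [0,1,3,1,0] :=
  h.of_flatMap (τ := unrelabel) fun c => by
    unfold relabel
    split_ifs <;> simp_all [unrelabel]

lemma isoterm_xytyx_of_isoterm_xyztxzy {S : Type*} [Monoid S] (h : Isoterm S [0,1,2,3,0,2,1]) :
    Isoterm S [0,1,3,1,0] :=
  isoterm_of_isoterm_relabel (tImage := [3,0]) (by decide)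
    (h.of_append_append (l := [0]) (r := []))

lemma isoterm_xytyx_of_isoterm_yzxtzyx {S : Type*} [Monoid S] (h : Isoterm S [1,2,0,3,2,1,0]) :
    Isoterm S [0,1,3,1,0] :=
  isoterm_of_isoterm_relabel (tImage := [0,3]) (by decide)
    (h.of_append_append (l := []) (r := [0]))

theorem stmt14 (S : Type*) [Monoid S] :
    (Isoterm S [0,1,3,1,0] →
      (∀ u : Wd, Sat S ([0,1,2,3,0,2,1], u) → u ≠ [0,1,2,3,0,2,1] →
        u = [1,2,0,3,2,1,0]) ∧
      (∀ u : Wd, Sat S ([1,2,0,3,2,1,0], u) → u ≠ [1,2,0,3,2,1,0] →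
        u = [0,1,2,3,0,2,1])) ∧
    (Isoterm S [0,1,2,3,0,2,1] ↔ Isoterm S [1,2,0,3,2,1,0]) := by
  refine ⟨fun hiso => ⟨fun u h hne => (eq_or_eq_of_sat hiso (.inl rfl) h).resolve_left hne,
    fun u h hne => (eq_or_eq_of_sat hiso (.inr rfl) h).resolve_right hne⟩, ⟨fun hw u h => ?_,
    fun hw' u h => ?_⟩⟩
  · rcases eq_or_eq_of_sat (isoterm_xytyx_of_isoterm_xyztxzy hw) (.inr rfl) h with rfl | rfl
    · exact absurd (hw _ h.symm) (by decide)
    · rfl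
  · rcases eq_or_eq_of_sat (isoterm_xytyx_of_isoterm_yzxtzyx hw') (.inl rfl) h with rfl | rfl
    · rfl
    · exact absurd (hw' _ h.symm) (by decide)
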